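/- arXiv:2503.07729 — 2 statements merged into one kernel-verified Lean document; each statement's English description precedes it below -/
import Mathlib

section
/- Let S ⊆ Fin D have cardinality d ≥ 1 and suppose E is injective on S (E n ≠ E m for distinct n, m ∈ S). Let ρ be a state supported on the shell of S, Π_A an observable, and ε > 0. If |⟨e n, Π_A (e n)⟩ − ⟨Π_A⟩_S| < ε for every n ∈ S (eigenstate thermalization to accuracy ε), then the infinite-time average lim_{T→∞} (1/(2T)) ∫_{−T}^{T} Tr(ρ(t) Π_A) dt exists and satisfies |lim_{T→∞} (1/(2T)) ∫_{−T}^{T} Tr(ρ(t) Π_A) dt − ⟨Π_A⟩_S| < ε. -/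
open MeasureTheory Filter
open scoped ComplexOrder

namespace QET

variable {D : ℕ}

/-- `exp(-itH)` for the Hamiltonian `H = Σ_n (E n) • P_n`, where `P_n` is the orthogonal
projection onto the `n`-th vector of the fixed orthonormal eigenbasis `e`.  All operators are
written as matrices in this eigenbasis, so `H` is diagonal and
`exp(-itH) = diag (exp (-i t E n))`. -/
noncomputable def U (E : Fin D → ℝ) (t : ℝ) : Matrix (Fin D) (Fin D) ℂ :=
  Matrix.diagonal fun n => Complex.exp (-(Complex.I) * t * (E n))

/-- Time evolution `X(t) = exp(-itH) · X · exp(itH)`. -/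
noncomputable def evolve (E : Fin D → ℝ) (t : ℝ) (X : Matrix (Fin D) (Fin D) ℂ) :
    Matrix (Fin D) (Fin D) ℂ :=
  U E t * X * U E (-t)

/-- A state: a positive semidefinite operator with unit trace. -/
def IsState (ρ : Matrix (Fin D) (Fin D) ℂ) : Prop :=
  ρ.PosSemidef ∧ ρ.trace = 1

/-- An observable: an orthogonal projection (Hermitian idempotent). -/
def IsObservable (P : Matrix (Fin D) (Fin D) ℂ) : Prop :=
  P.IsHermitian ∧ P * P = P

/-- Orthogonal projection `Π_S` onto the energy shell spanned by `{e n : n ∈ S}`. -/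
noncomputable def shellProj (S : Finset (Fin D)) : Matrix (Fin D) (Fin D) ℂ :=
  Matrix.diagonal fun n => if n ∈ S then 1 else 0

/-- A state is supported on the shell of `S`: `Π_S ρ Π_S = ρ`. -/
def SupportedOn (S : Finset (Fin D)) (ρ : Matrix (Fin D) (Fin D) ℂ) : Prop :=
  shellProj S * ρ * shellProj S = ρ

/-- Thermal value `⟨P⟩_S = Tr(P Π_S)/d` (a real number: trace of Hermitian products below). -/
noncomputable def thermVal (S : Finset (Fin D)) (P : Matrix (Fin D) (Fin D) ℂ) : ℝ :=
  (P * shellProj S).trace.re / S.card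

/-- Fourier transform `w̃(E) = ∫ w(t) exp(-iEt) dt` of a weight function. -/
noncomputable def fourier (w : ℝ → ℝ) (En : ℝ) : ℂ :=
  ∫ t : ℝ, (w t : ℂ) * Complex.exp (-(Complex.I) * En * t)

/-- A weight function: integrable, nonnegative, normalized to `∫ w = 1`. -/
structure IsWeight (w : ℝ → ℝ) : Prop where
  integrable : Integrable w
  nonneg : ∀ t, 0 ≤ w t
  normalized : (∫ t : ℝ, w t) = 1

/-- A completely positive weight: a weight function whose Fourier transform is a
nonnegative real number everywhere. -/
structure IsCPWeight (w : ℝ → ℝ) extends IsWeight w : Prop where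
  fourier_im : ∀ En : ℝ, (fourier w En).im = 0
  fourier_nonneg : ∀ En : ℝ, 0 ≤ (fourier w En).re

/-- The matrix element `⟨e n, (P - ⟨P⟩_S · 1) e m⟩ = ⟨e n, P e m⟩ - ⟨P⟩_S δ_{nm}`. -/
noncomputable def devEl (S : Finset (Fin D)) (P : Matrix (Fin D) (Fin D) ℂ)
    (n m : Fin D) : ℂ :=
  P n m - if n = m then (thermVal S P : ℂ) else 0

/-- Band variance `Σ_{n,m ∈ S, |E n - E m| < ΔE} |⟨e n, P e m⟩ - ⟨P⟩_S δ_{nm}|²`. -/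
noncomputable def bandVar (S : Finset (Fin D)) (E : Fin D → ℝ) (ΔE : ℝ)
    (P : Matrix (Fin D) (Fin D) ℂ) : ℝ :=
  ∑ n ∈ S, ∑ m ∈ S,
    if |E n - E m| < ΔE then ‖devEl S P n m‖ ^ 2 else 0

/-- Energy-band thermalization in the shell `S` with bandwidth `ΔE` and accuracy `ε`. -/
def EnergyBandTherm (S : Finset (Fin D)) (E : Fin D → ℝ) (ΔE ε : ℝ)
    (P : Matrix (Fin D) (Fin D) ℂ) : Prop :=
  (1 / (S.card : ℝ)) * bandVar S E ΔE P < ε ^ 2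

/-- Expectation value `⟨v, P v⟩` of an operator in a vector. -/
noncomputable def expVal (P : Matrix (Fin D) (Fin D) ℂ) (v : Fin D → ℂ) : ℂ :=
  dotProduct (star v) (P.mulVec v)

/-!
In the energy eigenbasis `Tr(ρ(t) Π_A) = Σ_{n,m} ρ_{nm} (Π_A)_{mn} e^{i(E_m - E_n)t}` is a
trigonometric polynomial, and its time average keeps exactly the resonant terms `E_n = E_m`.
For a state supported on a shell on which `E` is injective these are the diagonal terms, so the
limit is `Σ_{n ∈ S} ρ_{nn} (Π_A)_{nn}`: a convex combination, with weights `ρ_{nn}`, of the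
eigenstate values `(Π_A)_{nn}`, all of which lie in the open `ε`-ball around `⟨Π_A⟩_S`.
-/

open Complex Topology

noncomputable def timeAvg (f : ℝ → ℂ) (T : ℝ) : ℂ :=
  (1 / (2 * T) : ℝ) • ∫ t in (-T)..T, f t

lemma timeAvg_finsetSum {ι : Type*} (s : Finset ι) (f : ι → ℝ → ℂ)
    (hf : ∀ i ∈ s, Continuous (f i)) (T : ℝ) :
    timeAvg (fun t => ∑ i ∈ s, f i t) T = ∑ i ∈ s, timeAvg (f i) T := by
  rw [timeAvg, intervalIntegral.integral_finsetSum fun i hi => (hf i hi).intervalIntegrable _ _,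
    Finset.smul_sum]
  rfl

lemma timeAvg_const_mul (c : ℂ) (f : ℝ → ℂ) (T : ℝ) :
    timeAvg (fun t => c * f t) T = c * timeAvg f T := by
  rw [timeAvg, timeAvg, intervalIntegral.integral_const_mul, mul_smul_comm]

lemma timeAvg_const (c : ℂ) {T : ℝ} (hT : 0 < T) : timeAvg (fun _ => c) T = c := by
  rw [timeAvg, intervalIntegral.integral_const, smul_smul, sub_neg_eq_add, ← two_mul,
    one_div_mul_cancel (by positivity), one_smul]

lemma norm_timeAvg_exp_le {a : ℝ} (ha : a ≠ 0) {T : ℝ} (hT : 0 < T) :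
    ‖timeAvg (fun t => exp (I * a * t)) T‖ ≤ (T * |a|)⁻¹ := by
  have hIa : I * a ≠ 0 := mul_ne_zero I_ne_zero (ofReal_ne_zero.2 ha)
  have hint : ‖∫ t in (-T)..T, exp (I * a * t)‖ ≤ 2 / |a| := by
    rw [integral_exp_mul_complex hIa, norm_div, norm_mul, norm_I, one_mul, norm_real,
      Real.norm_eq_abs]
    gcongr
    calc ‖exp (I * a * T) - exp (I * a * ↑(-T))‖
        ≤ ‖exp (I * ↑(a * T))‖ + ‖exp (I * ↑(a * -T))‖ := by
          push_cast; simpa only [mul_assoc] using norm_sub_le _ _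
      _ = 2 := by rw [norm_exp_I_mul_ofReal, norm_exp_I_mul_ofReal]; norm_num
  rw [timeAvg, norm_smul, Real.norm_of_nonneg (by positivity)]
  calc 1 / (2 * T) * ‖∫ t in (-T)..T, exp (I * a * t)‖ ≤ 1 / (2 * T) * (2 / |a|) := by gcongr
    _ = (T * |a|)⁻¹ := by field_simp

lemma tendsto_timeAvg_exp (a : ℝ) :
    Tendsto (timeAvg fun t => exp (I * a * t)) atTop (𝓝 (if a = 0 then 1 else 0)) := by
  split_ifs with ha
  · refine tendsto_const_nhds.congr' ?_
    filter_upwards [eventually_gt_atTop 0] with T hT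
    simpa only [ha, ofReal_zero, mul_zero, zero_mul, exp_zero] using (timeAvg_const 1 hT).symm
  · have hgrow : Tendsto (fun T : ℝ => T * |a|) atTop atTop :=
      tendsto_id.atTop_mul_const (abs_pos.2 ha)
    refine squeeze_zero_norm' ?_ hgrow.inv_tendsto_atTop
    filter_upwards [eventually_gt_atTop 0] with T hT
    exact norm_timeAvg_exp_le ha hT

lemma tendsto_timeAvg_sum_exp {ι : Type*} (s : Finset ι) (c : ι → ℂ) (a : ι → ℝ) :
    Tendsto (timeAvg fun t => ∑ i ∈ s, c i * exp (I * a i * t)) atTop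
      (𝓝 (∑ i ∈ s, if a i = 0 then c i else 0)) := by
  have hcont : ∀ i ∈ s, Continuous fun t : ℝ => c i * exp (I * a i * t) := fun i _ => by
    fun_prop
  simp_rw [funext (timeAvg_finsetSum s _ hcont), timeAvg_const_mul]
  refine tendsto_finsetSum s fun i _ => ?_
  simpa only [mul_ite, mul_one, mul_zero] using (tendsto_timeAvg_exp (a i)).const_mul (c i)

lemma evolve_apply (E : Fin D → ℝ) (t : ℝ) (X : Matrix (Fin D) (Fin D) ℂ) (n m : Fin D) :
    evolve E t X n m = exp (-I * t * E n) * X n m * exp (I * t * E m) := by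
  simp [evolve, U, Matrix.mul_diagonal, Matrix.diagonal_mul]

lemma trace_evolve_mul (E : Fin D → ℝ) (t : ℝ) (ρ P : Matrix (Fin D) (Fin D) ℂ) :
    (evolve E t ρ * P).trace =
      ∑ p : Fin D × Fin D, ρ p.1 p.2 * P p.2 p.1 * exp (I * ↑(E p.2 - E p.1) * t) := by
  rw [Fintype.sum_prod_type, Matrix.trace]
  refine Finset.sum_congr rfl fun n _ => ?_
  rw [Matrix.diag_apply, Matrix.mul_apply]
  refine Finset.sum_congr rfl fun m _ => ?_
  have hphase : exp (I * ↑(E m - E n) * t) = exp (-I * t * E n) * exp (I * t * E m) := by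
    rw [← exp_add]; push_cast; ring_nf
  rw [evolve_apply, hphase]
  ring

lemma tendsto_timeAvg_trace_evolve_mul (E : Fin D → ℝ) (ρ P : Matrix (Fin D) (Fin D) ℂ) :
    Tendsto (timeAvg fun t => (evolve E t ρ * P).trace) atTop
      (𝓝 (∑ p : Fin D × Fin D, if E p.1 = E p.2 then ρ p.1 p.2 * P p.2 p.1 else 0)) := by
  simp_rw [trace_evolve_mul]
  simpa only [sub_eq_zero, eq_comm] using tendsto_timeAvg_sum_exp Finset.univ
    (fun p : Fin D × Fin D => ρ p.1 p.2 * P p.2 p.1) (fun p => E p.2 - E p.1)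

namespace SupportedOn

variable {S : Finset (Fin D)} {ρ : Matrix (Fin D) (Fin D) ℂ}

lemma apply_eq_zero (h : SupportedOn S ρ) {n m : Fin D} (hnm : ¬(n ∈ S ∧ m ∈ S)) : ρ n m = 0 := by
  rw [← h]
  simp only [shellProj, Matrix.mul_diagonal, Matrix.diagonal_mul]
  by_cases hn : n ∈ S <;> simp_all

lemma sum_diag_mul (h : SupportedOn S ρ) (f : Fin D → ℂ) :
    ∑ n ∈ S, ρ n n * f n = ∑ n, ρ n n * f n :=
  Finset.sum_subset (Finset.subset_univ S) fun n _ hn => by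
    rw [h.apply_eq_zero (by tauto), zero_mul]

lemma sum_diag (h : SupportedOn S ρ) : ∑ n ∈ S, ρ n n = ρ.trace := by
  simpa only [mul_one, Matrix.trace, Matrix.diag_apply] using h.sum_diag_mul fun _ => 1

lemma sum_resonant_eq_sum_diag (h : SupportedOn S ρ) {E : Fin D → ℝ}
    (hinj : ∀ n ∈ S, ∀ m ∈ S, n ≠ m → E n ≠ E m) (P : Matrix (Fin D) (Fin D) ℂ) :
    ∑ p : Fin D × Fin D, (if E p.1 = E p.2 then ρ p.1 p.2 * P p.2 p.1 else 0) =
      ∑ n ∈ S, ρ n n * P n n := by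
  rw [h.sum_diag_mul, Fintype.sum_prod_type]
  refine Finset.sum_congr rfl fun n _ => ?_
  rw [Finset.sum_eq_single n (fun m _ hmn => ?_) (by simp), if_pos rfl]
  split_ifs with hE
  · rw [h.apply_eq_zero fun hS => hinj n hS.1 m hS.2 (Ne.symm hmn) hE, zero_mul]
  · rfl

end SupportedOn

lemma IsState.norm_sum_diag_mul_sub_lt {S : Finset (Fin D)} {ρ P : Matrix (Fin D) (Fin D) ℂ}
    (hρ : IsState ρ) (hsupp : SupportedOn S ρ) {v : ℂ} {ε : ℝ}
    (hP : ∀ n ∈ S, ‖P n n - v‖ < ε) : ‖∑ n ∈ S, ρ n n * P n n - v‖ < ε := by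
  have hreal : ∀ n, ((ρ n n).re : ℂ) = ρ n n := congrFun hρ.1.1.coe_re_diag
  have hw₀ : ∀ n ∈ S, 0 ≤ (ρ n n).re := fun n _ => (Complex.nonneg_iff.1 hρ.1.diag_nonneg).1
  have hw₁ : ∑ n ∈ S, (ρ n n).re = 1 := by
    rw [← Complex.re_sum, hsupp.sum_diag, hρ.2, Complex.one_re]
  have hmem := (convex_ball v ε).sum_mem hw₀ hw₁ (z := fun n => P n n)
    (by simpa only [Metric.mem_ball, dist_eq_norm] using hP)
  simpa only [Metric.mem_ball, dist_eq_norm, Complex.real_smul, hreal] using hmem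

theorem eigenstate_thermalization_implies_thermalization_oa_general
    {D : ℕ} (E : Fin D → ℝ)
    (S : Finset (Fin D))
    (hinj : ∀ n ∈ S, ∀ m ∈ S, n ≠ m → E n ≠ E m)
    (ρ PiA : Matrix (Fin D) (Fin D) ℂ)
    (hρ : IsState ρ) (hsupp : SupportedOn S ρ)
    (ε : ℝ)
    (hET : ∀ n ∈ S, ‖PiA n n - (thermVal S PiA : ℂ)‖ < ε) :
    ∃ L : ℂ,
      Filter.Tendsto
        (fun T : ℝ => (1 / (2 * T) : ℝ) • ∫ t in (-T)..T, (evolve E t ρ * PiA).trace)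
        Filter.atTop (nhds L) ∧
      ‖L - (thermVal S PiA : ℂ)‖ < ε := by
  refine ⟨∑ n ∈ S, ρ n n * PiA n n, ?_, hρ.norm_sum_diag_mul_sub_lt hsupp hET⟩
  rw [← hsupp.sum_resonant_eq_sum_diag hinj]
  exact tendsto_timeAvg_trace_evolve_mul E ρ PiA

/-- **Quantum eigenstate thermalization + nondegeneracy implies thermalization o.a.**
Let `S ⊆ Fin D` with `|S| = d ≥ 1`, suppose `E` is injective on `S`, let `ρ` be a state
supported on the shell of `S` and `Π_A` an observable with
`|⟨e n, Π_A e n⟩ - ⟨Π_A⟩_S| < ε` for all `n ∈ S`.  Then the infinite-time average of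
`Tr(ρ(t) Π_A)` exists and is within `ε` of the thermal value `⟨Π_A⟩_S`. -/
theorem eigenstate_thermalization_implies_thermalization_oa
    {D : ℕ} (hD : 0 < D) (E : Fin D → ℝ)
    (S : Finset (Fin D)) (hd : 1 ≤ S.card)
    (hinj : ∀ n ∈ S, ∀ m ∈ S, n ≠ m → E n ≠ E m)
    (ρ PiA : Matrix (Fin D) (Fin D) ℂ)
    (hρ : IsState ρ) (hsupp : SupportedOn S ρ) (hPiA : IsObservable PiA)
    (ε : ℝ) (hε : 0 < ε)
    (hET : ∀ n ∈ S, ‖PiA n n - (thermVal S PiA : ℂ)‖ < ε) :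
    ∃ L : ℂ,
      Filter.Tendsto
        (fun T : ℝ => (1 / (2 * T) : ℝ) • ∫ t in (-T)..T, (evolve E t ρ * PiA).trace)
        Filter.atTop (nhds L) ∧
      ‖L - (thermVal S PiA : ℂ)‖ < ε :=
  eigenstate_thermalization_implies_thermalization_oa_general E S hinj ρ PiA hρ hsupp ε hET

end QET
end

section
/- Assume Π_A satisfies energy-band thermalization in the shell S (of cardinality d ≥ 1) with bandwidth ΔE > 0 and accuracy ε > 0. Let S' ⊆ S be a nonempty subset with |E q − E r| < ΔE for all q, r ∈ S', write d' := |S'|, and let (φ_k)_{k ∈ Fin d'} be any orthonormal basis of the span of {e q : q ∈ S'}. Then for every λ > 0, the number of indices k ∈ Fin d' with |⟨φ_k, Π_A φ_k⟩ − ⟨Π_A⟩_S| ≥ λ is strictly less than (ε/λ) · √(2 · d · d'). -/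
open MeasureTheory Filter
open scoped ComplexOrder

namespace QET

variable {D : ℕ}

/-! The deviations `⟨φ k, Π_A φ k⟩ - ⟨Π_A⟩_S` are the diagonal entries, in the basis `φ`, of the
compression `Π_{S'} (Π_A - ⟨Π_A⟩_S) Π_{S'}`. By Cauchy–Schwarz and Bessel, the squared diagonal
entries of a matrix in any orthonormal family sum to at most its squared Hilbert–Schmidt norm. For
the compression this norm is a sub-sum of the band variance, since all level spacings in `S'` lie
in the band, so it is `< ε² d`. Chebyshev's inequality then bounds the number `N` of bad indices by
`N λ² < ε² d`, and `N ≤ d'` turns this into `N² < ε² d d' / λ²`. -/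

open Finset Matrix

section Bessel

variable {ι n : Type*} [Fintype n]

theorem orthonormal_toLp_of_dotProduct [DecidableEq ι] {φ : ι → n → ℂ}
    (hon : ∀ k l, star (φ k) ⬝ᵥ φ l = if k = l then 1 else 0) :
    Orthonormal ℂ fun k => WithLp.toLp 2 (φ k) := by
  rw [orthonormal_iff_ite]
  intro k l
  rw [EuclideanSpace.inner_toLp_toLp, dotProduct_comm]
  exact hon k l

theorem sum_norm_mulVec_apply_sq_le [Fintype ι] {φ : ι → n → ℂ}
    (hφ : Orthonormal ℂ fun k => WithLp.toLp 2 (φ k)) {m : Type*} (M : Matrix m n ℂ) (q : m) :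
    ∑ k, ‖(M *ᵥ φ k) q‖ ^ 2 ≤ ∑ r, ‖M q r‖ ^ 2 := by
  have hrow : ∀ k,
      ‖(M *ᵥ φ k) q‖ = ‖inner ℂ (WithLp.toLp 2 (φ k)) (WithLp.toLp 2 (star (M q)))‖ := fun k => by
    rw [EuclideanSpace.inner_toLp_toLp, star_dotProduct_star, norm_star, dotProduct_comm]
    rfl
  simp_rw [hrow]
  refine (hφ.sum_inner_products_le _).trans_eq ?_
  simp [EuclideanSpace.norm_sq_eq]

theorem sum_norm_mulVec_sq_le [Fintype ι] {φ : ι → n → ℂ}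
    (hφ : Orthonormal ℂ fun k => WithLp.toLp 2 (φ k)) {m : Type*} [Fintype m] (M : Matrix m n ℂ) :
    ∑ k, ‖WithLp.toLp 2 (M *ᵥ φ k)‖ ^ 2 ≤ ∑ q, ∑ r, ‖M q r‖ ^ 2 := by
  simp_rw [EuclideanSpace.norm_sq_eq]
  rw [sum_comm]
  exact sum_le_sum fun q _ => sum_norm_mulVec_apply_sq_le hφ M q

end Bessel

theorem norm_expVal_le_norm_mulVec {v : Fin D → ℂ} (hv : ‖WithLp.toLp 2 v‖ = 1)
    (M : Matrix (Fin D) (Fin D) ℂ) :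
    ‖expVal M v‖ ≤ ‖WithLp.toLp 2 (M *ᵥ v)‖ := by
  have h := norm_inner_le_norm (𝕜 := ℂ) (WithLp.toLp 2 v) (WithLp.toLp 2 (M *ᵥ v))
  rwa [EuclideanSpace.inner_toLp_toLp, dotProduct_comm, hv, one_mul] at h

theorem sum_norm_expVal_sq_le {ι : Type*} [Fintype ι] {φ : ι → Fin D → ℂ}
    (hφ : Orthonormal ℂ fun k => WithLp.toLp 2 (φ k)) (M : Matrix (Fin D) (Fin D) ℂ) :
    ∑ k, ‖expVal M (φ k)‖ ^ 2 ≤ ∑ q, ∑ r, ‖M q r‖ ^ 2 :=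
  (sum_le_sum fun k _ =>
    pow_le_pow_left₀ (norm_nonneg _) (norm_expVal_le_norm_mulVec (hφ.1 k) M) 2).trans
      (sum_norm_mulVec_sq_le hφ M)

theorem expVal_sub_smul_one (P : Matrix (Fin D) (Fin D) ℂ) (c : ℂ) (v : Fin D → ℂ) :
    expVal (P - c • 1) v = expVal P v - c * (star v ⬝ᵥ v) := by
  simp [expVal, sub_mulVec, smul_mulVec, dotProduct_sub]

theorem expVal_mul_mul_of_mulVec_eq {A : Matrix (Fin D) (Fin D) ℂ} (hA : A.IsHermitian)
    {v : Fin D → ℂ} (hv : A *ᵥ v = v) (M : Matrix (Fin D) (Fin D) ℂ) :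
    expVal (A * M * A) v = expVal M v := by
  have hstar : star v ᵥ* A = star v := by
    conv_lhs => rw [← hA.eq, ← star_mulVec, hv]
  rw [expVal, ← mulVec_mulVec, ← mulVec_mulVec, hv, dotProduct_mulVec, hstar,
    expVal]

theorem shellProj_isHermitian (S : Finset (Fin D)) : (shellProj S).IsHermitian := by
  apply isHermitian_diagonal_of_self_adjoint
  ext n
  simp [apply_ite]

theorem shellProj_mul_mul_shellProj_apply (S : Finset (Fin D)) (M : Matrix (Fin D) (Fin D) ℂ)
    (q r : Fin D) :
    (shellProj S * M * shellProj S) q r = if q ∈ S ∧ r ∈ S then M q r else 0 := by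
  by_cases hq : q ∈ S <;> by_cases hr : r ∈ S <;>
    simp [shellProj, diagonal_mul, mul_diagonal, hq, hr]

theorem sum_norm_shellProj_mul_mul_shellProj_sq (S : Finset (Fin D))
    (M : Matrix (Fin D) (Fin D) ℂ) :
    ∑ q, ∑ r, ‖(shellProj S * M * shellProj S) q r‖ ^ 2 = ∑ q ∈ S, ∑ r ∈ S, ‖M q r‖ ^ 2 := by
  simp [shellProj_mul_mul_shellProj_apply, ite_and, apply_ite, sum_ite_mem]

theorem sub_thermVal_smul_one_apply (S : Finset (Fin D)) (P : Matrix (Fin D) (Fin D) ℂ)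
    (q r : Fin D) :
    (P - (thermVal S P : ℂ) • 1) q r = devEl S P q r := by
  simp [devEl, one_apply]

theorem sum_norm_devEl_sq_le_bandVar {S S' : Finset (Fin D)} (hS'S : S' ⊆ S) {E : Fin D → ℝ}
    {ΔE : ℝ} (hnarrow : ∀ q ∈ S', ∀ r ∈ S', |E q - E r| < ΔE) (P : Matrix (Fin D) (Fin D) ℂ) :
    ∑ q ∈ S', ∑ r ∈ S', ‖devEl S P q r‖ ^ 2 ≤ bandVar S E ΔE P := by
  set f : Fin D → Fin D → ℝ := fun q r => if |E q - E r| < ΔE then ‖devEl S P q r‖ ^ 2 else 0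
  have hf : ∀ q r, 0 ≤ f q r := fun q r => by positivity
  calc ∑ q ∈ S', ∑ r ∈ S', ‖devEl S P q r‖ ^ 2 = ∑ q ∈ S', ∑ r ∈ S', f q r :=
        sum_congr rfl fun q hq => sum_congr rfl fun r hr => by
          simp [f, hnarrow q hq r hr]
    _ ≤ ∑ q ∈ S, ∑ r ∈ S, f q r :=
        (sum_le_sum fun q _ => sum_le_sum_of_subset_of_nonneg hS'S
          fun r _ _ => hf q r).trans
        (sum_le_sum_of_subset_of_nonneg hS'S fun q _ _ => sum_nonneg fun r _ => hf q r)

theorem bandVar_lt_of_energyBandTherm {S : Finset (Fin D)} (hS : S.Nonempty) {E : Fin D → ℝ}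
    {ΔE ε : ℝ} {P : Matrix (Fin D) (Fin D) ℂ} (h : EnergyBandTherm S E ΔE ε P) :
    bandVar S E ΔE P < ε ^ 2 * S.card := by
  rwa [EnergyBandTherm, one_div, inv_mul_lt_iff₀' (by exact_mod_cast hS.card_pos)] at h

theorem card_filter_le_norm_mul_sq_le_sum {ι E : Type*} [Fintype ι] [SeminormedAddCommGroup E]
    (x : ι → E) {lam : ℝ} (hlam : 0 ≤ lam) :
    (#{k | lam ≤ ‖x k‖} : ℝ) * lam ^ 2 ≤ ∑ k, ‖x k‖ ^ 2 := by
  rw [← nsmul_eq_mul]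
  calc #{k | lam ≤ ‖x k‖} • lam ^ 2 ≤ ∑ k ∈ {k | lam ≤ ‖x k‖}, ‖x k‖ ^ 2 :=
        card_nsmul_le_sum _ _ _ fun k hk =>
          pow_le_pow_left₀ hlam (mem_filter.mp hk).2 2
    _ ≤ ∑ k, ‖x k‖ ^ 2 :=
        sum_le_sum_of_subset_of_nonneg (subset_univ _) fun k _ _ => by positivity

theorem lt_div_mul_sqrt_of_mul_sq_lt {N n d ε lam : ℝ} (hN : 0 ≤ N) (hNn : N ≤ n) (hn : 0 < n)
    (hε : 0 < ε) (hlam : 0 < lam) (h : N * lam ^ 2 < ε ^ 2 * d) :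
    N < ε / lam * √(2 * d * n) := by
  have hd : 0 < d := by nlinarith
  rw [div_mul_eq_mul_div, lt_div_iff₀ hlam, ← Real.sqrt_sq hε.le, ← Real.sqrt_mul (sq_nonneg ε),
    Real.lt_sqrt (by positivity)]
  nlinarith [mul_le_mul_of_nonneg_right hNn (mul_nonneg hN (sq_nonneg lam))]

theorem almost_all_small_shell_basis_states_are_thermal_general
    {D : ℕ} (E : Fin D → ℝ)
    (S : Finset (Fin D))
    (PiA : Matrix (Fin D) (Fin D) ℂ)
    (ΔE ε : ℝ) (hε : 0 < ε)
    (hEBT : EnergyBandTherm S E ΔE ε PiA)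
    (S' : Finset (Fin D)) (hS'S : S' ⊆ S) (hS'ne : S'.Nonempty)
    (hnarrow : ∀ q ∈ S', ∀ r ∈ S', |E q - E r| < ΔE)
    (φ : Fin S'.card → (Fin D → ℂ))
    (hshell : ∀ k, (shellProj S').mulVec (φ k) = φ k)
    (hon : ∀ k l, dotProduct (star (φ k)) (φ l) = if k = l then 1 else 0)
    (lam : ℝ) (hlam : 0 < lam) :
    ((Finset.univ.filter fun k : Fin S'.card =>
        lam ≤ ‖expVal PiA (φ k) - (thermVal S PiA : ℂ)‖).card : ℝ)
      < (ε / lam) * Real.sqrt (2 * S.card * S'.card) := by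
  set c : ℂ := (thermVal S PiA : ℂ)
  set dev := shellProj S' * (PiA - c • 1) * shellProj S'
  have hdev : ∀ k, expVal PiA (φ k) - c = expVal dev (φ k) := fun k => by
    rw [expVal_mul_mul_of_mulVec_eq (shellProj_isHermitian S') (hshell k), expVal_sub_smul_one,
      hon, if_pos rfl, mul_one]
  have hsum : ∑ k, ‖expVal PiA (φ k) - c‖ ^ 2 < ε ^ 2 * S.card :=
    calc ∑ k, ‖expVal PiA (φ k) - c‖ ^ 2 = ∑ k, ‖expVal dev (φ k)‖ ^ 2 := by simp_rw [hdev]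
      _ ≤ ∑ q, ∑ r, ‖dev q r‖ ^ 2 := sum_norm_expVal_sq_le (orthonormal_toLp_of_dotProduct hon) dev
      _ = ∑ q ∈ S', ∑ r ∈ S', ‖devEl S PiA q r‖ ^ 2 := by
        simp_rw [dev, sum_norm_shellProj_mul_mul_shellProj_sq, c, sub_thermVal_smul_one_apply]
      _ ≤ bandVar S E ΔE PiA := sum_norm_devEl_sq_le_bandVar hS'S hnarrow PiA
      _ < ε ^ 2 * S.card := bandVar_lt_of_energyBandTherm (hS'ne.mono hS'S) hEBT
  refine lt_div_mul_sqrt_of_mul_sq_lt (Nat.cast_nonneg _) ?_ (by exact_mod_cast hS'ne.card_pos)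
    hε hlam ((card_filter_le_norm_mul_sq_le_sum _ hlam.le).trans_lt hsum)
  exact_mod_cast (card_filter_le _ _).trans (card_fin _).le

/-- **Instantaneous thermal equilibrium in small energy shells (basis-fraction version).**
If `Π_A` satisfies energy-band thermalization in the shell `S` (of cardinality `d ≥ 1`)
with bandwidth `ΔE > 0` and accuracy `ε > 0`, `S' ⊆ S` is nonempty with all level spacings
within the band, `d' := |S'|`, and `(φ_k)_{k ∈ Fin d'}` is an orthonormal basis of the span
of `{e q : q ∈ S'}`, then for every `λ > 0` the number of `k` with
`|⟨φ_k, Π_A φ_k⟩ - ⟨Π_A⟩_S| ≥ λ` is `< (ε/λ) · √(2 d d')`. -/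
theorem almost_all_small_shell_basis_states_are_thermal
    {D : ℕ} (hD : 0 < D) (E : Fin D → ℝ)
    (S : Finset (Fin D)) (hd : 1 ≤ S.card)
    (PiA : Matrix (Fin D) (Fin D) ℂ) (hPiA : IsObservable PiA)
    (ΔE ε : ℝ) (hΔE : 0 < ΔE) (hε : 0 < ε)
    (hEBT : EnergyBandTherm S E ΔE ε PiA)
    (S' : Finset (Fin D)) (hS'S : S' ⊆ S) (hS'ne : S'.Nonempty)
    (hnarrow : ∀ q ∈ S', ∀ r ∈ S', |E q - E r| < ΔE)
    (φ : Fin S'.card → (Fin D → ℂ))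
    (hshell : ∀ k, (shellProj S').mulVec (φ k) = φ k)
    (hon : ∀ k l, dotProduct (star (φ k)) (φ l) = if k = l then 1 else 0)
    (lam : ℝ) (hlam : 0 < lam) :
    ((Finset.univ.filter fun k : Fin S'.card =>
        lam ≤ ‖expVal PiA (φ k) - (thermVal S PiA : ℂ)‖).card : ℝ)
      < (ε / lam) * Real.sqrt (2 * S.card * S'.card) :=
  almost_all_small_shell_basis_states_are_thermal_general E S PiA ΔE ε hε hEBT S' hS'S hS'ne hnarrow
    φ hshell hon lam hlam

end QET
end
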